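/- Asymptotic approach to the linear solution: let ρ1, ρ2 ≥ 0 satisfy 0 < κ1/2 − 2ρ1 ≤ 1 and 0 < κ2/2 − 2ρ2 ≤ 1, and let 0 < η < 1. Then there exist constants C > 0 and ε₀ > 0, depending only on κ1, κ2, ρ1, ρ2, ν1, ν2, η, such that for every real ε with 0 < |ε| ≤ ε₀ one has |ε|^{−1+η} ≤ T_ε and, with t_ε = |ε|^{−1+η}: (Σ_{(m,n) ∈ ℤ^{ν1}×ℤ^{ν2}} e^{2ρ1|m| + 2ρ2|n|} |𝔠(t_ε,m,n) − Φ^{t_ε}(m,n)·c(m,n)|²)^{1/2} ≤ C·|ε|^{η}. In particular this quantity tends to 0 as ε → 0. -/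

import Mathlib

open MeasureTheory intervalIntegral Filter Topology

noncomputable section

/-- Lattice of Fourier modes `ℤ^{ν1} × ℤ^{ν2}`. -/
abbrev ZLat (ν1 ν2 : ℕ) := (Fin ν1 → ℤ) × (Fin ν2 → ℤ)

/-- ℓ¹-norm of a lattice vector. -/
def l1 {ν : ℕ} (m : Fin ν → ℤ) : ℝ := ∑ j, |(m j : ℝ)|

/-- Euclidean pairing of a lattice vector with a frequency vector. -/
def zdot {ν : ℕ} (m : Fin ν → ℤ) (ω : Fin ν → ℝ) : ℝ := ∑ j, (m j : ℝ) * ω j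

/-- The linear phase `Φ^t(m,n) = exp(−i(⟨m,ω⟩² + ⟨n,ω'⟩²)t)`. -/
def Phi {ν1 ν2 : ℕ} (ω : Fin ν1 → ℝ) (ω' : Fin ν2 → ℝ) (t : ℝ) (p : ZLat ν1 ν2) : ℂ :=
  Complex.exp (-Complex.I * (((zdot p.1 ω) ^ 2 + (zdot p.2 ω') ^ 2 : ℝ) : ℂ) * (t : ℂ))

/-- Triples of lattice points with prescribed alternating sum. -/
def TripleFiber (ν1 ν2 : ℕ) (p : ZLat ν1 ν2) : Type :=
  {v : ZLat ν1 ν2 × ZLat ν1 ν2 × ZLat ν1 ν2 // v.1 - v.2.1 + v.2.2 = p}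

/-- The Picard iteration for the Fourier coefficients of the 2D cubic NLS. -/
def picard {ν1 ν2 : ℕ} (ω : Fin ν1 → ℝ) (ω' : Fin ν2 → ℝ) (c : ZLat ν1 ν2 → ℂ) (ε : ℝ) :
    ℕ → ℝ → ZLat ν1 ν2 → ℂ
  | 0 => fun t p => Phi ω ω' t p * c p
  | (k + 1) => fun t p => Phi ω ω' t p * c p +
      Complex.I * (ε : ℂ) * ∫ s in (0:ℝ)..t, Phi ω ω' (t - s) p *
        ∑' v : TripleFiber ν1 ν2 p,
          picard ω ω' c ε k s v.val.1 * (starRingEnd ℂ) (picard ω ω' c ε k s v.val.2.1) *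
            picard ω ω' c ε k s v.val.2.2

/-- The time scale `T_ε`. -/
def Teps (ν1 ν2 : ℕ) (κ1 κ2 ε : ℝ) : ℝ := (4 / 27) * (κ1 / 6) ^ ν1 * (κ2 / 6) ^ ν2 * |ε|⁻¹

/-- The constant `𝒜`. -/
def Acal (ν1 ν2 : ℕ) (κ1 κ2 : ℝ) : ℝ := (3 / 2) * (6 / κ1) ^ ν1 * (6 / κ2) ^ ν2

/-- Abstract branches of the combinatorial tree. -/
inductive Branch where
  | zero : Branch
  | one : Branch
  | node : Branch → Branch → Branch → Branch
deriving DecidableEq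

/-- The counting function ℓ. -/
def ell : Branch → ℕ
  | .zero => 0
  | .one => 1
  | .node a b c => ell a + ell b + ell c + 1

/-- The denominator function 𝔇. -/
def frakD : Branch → ℕ
  | .zero => 1
  | .one => 1
  | .node a b c => (ell a + ell b + ell c + 1) * (frakD a * frakD b * frakD c)

/-- The finite branch sets `Γ^(k)`: `Γ^(1) = {0,1}`, `Γ^(k) = {0} ∪ (Γ^(k-1))³` for `k ≥ 2`. -/
def GammaSet : ℕ → Finset Branch
  | 0 => ∅
  | 1 => {Branch.zero, Branch.one}
  | (k + 2) => insert Branch.zero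
      (((GammaSet (k + 1)) ×ˢ (GammaSet (k + 1)) ×ˢ (GammaSet (k + 1))).image
        fun x => Branch.node x.1 x.2.1 x.2.2)

/-- The domain `D^{(k,γ)}` attached to a branch. -/
def Dom (ν1 ν2 : ℕ) : Branch → Type
  | .zero => ZLat ν1 ν2
  | .one => ZLat ν1 ν2 × ZLat ν1 ν2 × ZLat ν1 ν2
  | .node a b c => Dom ν1 ν2 a × Dom ν1 ν2 b × Dom ν1 ν2 c

/-- Flattening of an element of `D^{(k,γ)}` to the tuple `((𝔪_j,𝔫_j))_{1≤j≤2σ(γ)}`. -/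
def flatten {ν1 ν2 : ℕ} : (γ : Branch) → Dom ν1 ν2 γ → List (ZLat ν1 ν2)
  | .zero, p => [p]
  | .one, s => [s.1, s.2.1, s.2.2]
  | .node a b c, s => flatten a s.1 ++ flatten b s.2.1 ++ flatten c s.2.2

/-- Alternating sum of a list: `a₁ − a₂ + a₃ − ⋯`. -/
def altSum {ν1 ν2 : ℕ} : List (ZLat ν1 ν2) → ZLat ν1 ν2
  | [] => 0
  | (a :: l) => a - altSum l

/-- The summation function `λ`. -/
def lam {ν1 ν2 : ℕ} (γ : Branch) (s : Dom ν1 ν2 γ) : ZLat ν1 ν2 := altSum (flatten γ s)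

/-- The coefficient factor `ℭ^{(k,γ)}`. -/
def frakC {ν1 ν2 : ℕ} (c : ZLat ν1 ν2 → ℂ) : (γ : Branch) → Dom ν1 ν2 γ → ℂ
  | .zero, p => c p
  | .one, s => c s.1 * (starRingEnd ℂ) (c s.2.1) * c s.2.2
  | .node a b c', s =>
      frakC c a s.1 * (starRingEnd ℂ) (frakC c b s.2.1) * frakC c c' s.2.2

/-- The nested oscillatory integral factor `ℑ^{(k,γ)}`. -/
def frakI {ν1 ν2 : ℕ} (ω : Fin ν1 → ℝ) (ω' : Fin ν2 → ℝ) :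
    (γ : Branch) → ℝ → Dom ν1 ν2 γ → ℂ
  | .zero, t, p => Phi ω ω' t (lam .zero p)
  | .one, t, s => ∫ x in (0:ℝ)..t, Phi ω ω' (t - x) (lam .one s) *
      (Phi ω ω' x s.1 * (starRingEnd ℂ) (Phi ω ω' x s.2.1) * Phi ω ω' x s.2.2)
  | .node a b c, t, s => ∫ x in (0:ℝ)..t, Phi ω ω' (t - x) (lam (.node a b c) s) *
      (frakI ω ω' a x s.1 * (starRingEnd ℂ) (frakI ω ω' b x s.2.1) * frakI ω ω' c x s.2.2)

/-- The prefactor `𝔉^{(k,γ)}`. -/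
def frakF {ν1 ν2 : ℕ} (ε : ℝ) : (γ : Branch) → Dom ν1 ν2 γ → ℂ
  | .zero, _ => 1
  | .one, _ => Complex.I * (ε : ℂ)
  | .node a b c, s => Complex.I * (ε : ℂ) *
      (frakF ε a s.1 * (starRingEnd ℂ) (frakF ε b s.2.1) * frakF ε c s.2.2)

end

noncomputable section AsymAux

open scoped ENNReal

namespace AsymAux

lemma l1_nonneg {ν : ℕ} (m : Fin ν → ℤ) : 0 ≤ l1 m :=
  Finset.sum_nonneg fun _ _ => abs_nonneg _

lemma l1_zero {ν : ℕ} : l1 (0 : Fin ν → ℤ) = 0 := by simp [l1]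

lemma l1_sub_add {ν : ℕ} (a b c : Fin ν → ℤ) : l1 (a - b + c) ≤ l1 a + l1 b + l1 c := by
  unfold l1
  rw [← Finset.sum_add_distrib, ← Finset.sum_add_distrib]
  refine Finset.sum_le_sum fun j _ => ?_
  have h : (((a - b + c) j : ℤ) : ℝ) = (a j : ℝ) - (b j : ℝ) + (c j : ℝ) := by
    simp [Pi.add_apply, Pi.sub_apply]
  rw [h, sub_eq_add_neg]
  refine (abs_add_le _ _).trans ?_
  have h2 := abs_add_le ((a j : ℝ)) (-(b j : ℝ))
  rw [abs_neg] at h2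
  linarith

lemma norm_Phi {ν1 ν2 : ℕ} (ω : Fin ν1 → ℝ) (ω' : Fin ν2 → ℝ) (t : ℝ) (p : ZLat ν1 ν2) :
    ‖Phi ω ω' t p‖ = 1 := by
  have h : -Complex.I * (((zdot p.1 ω) ^ 2 + (zdot p.2 ω') ^ 2 : ℝ) : ℂ) * (t : ℂ)
      = ((-(((zdot p.1 ω) ^ 2 + (zdot p.2 ω') ^ 2) * t) : ℝ) : ℂ) * Complex.I := by
    push_cast
    ring
  rw [Phi, h, Complex.norm_exp_ofReal_mul_I]

lemma summable_exp_int {β : ℝ} (hβ : 0 < β) :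
    Summable fun n : ℤ => Real.exp (-β * |(n : ℝ)|) := by
  have hgeom : Summable fun n : ℕ => Real.exp (-β) ^ n :=
    summable_geometric_of_lt_one (Real.exp_pos _).le
      (Real.exp_lt_one_iff.mpr (by linarith))
  have hnat : ∀ n : ℕ, Real.exp (-β * |((n : ℤ) : ℝ)|) = Real.exp (-β) ^ n := by
    intro n
    rw [← Real.exp_nat_mul]
    congr 1
    push_cast
    rw [abs_of_nonneg (by positivity : (0:ℝ) ≤ (n:ℝ))]
    ring
  refine Summable.of_nat_of_neg (hgeom.congr fun n => (hnat n).symm) ?_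
  refine hgeom.congr fun n => ?_
  rw [← hnat n]
  congr 2
  push_cast
  rw [abs_neg]

lemma summable_exp_pi {β : ℝ} (hβ : 0 < β) :
    ∀ ν : ℕ, Summable fun m : Fin ν → ℤ => Real.exp (-β * l1 m)
  | 0 => Summable.of_finite
  | (ν + 1) => by
    have ih := summable_exp_pi hβ ν
    have hmul : Summable fun q : ℤ × (Fin ν → ℤ) =>
        Real.exp (-β * |(q.1 : ℝ)|) * Real.exp (-β * l1 q.2) :=
      (summable_exp_int hβ).mul_of_nonneg ih (fun _ => (Real.exp_pos _).le)
        fun _ => (Real.exp_pos _).le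
    have heq : ∀ q : ℤ × (Fin ν → ℤ),
        Real.exp (-β * |(q.1 : ℝ)|) * Real.exp (-β * l1 q.2)
          = Real.exp (-β * l1 ((Fin.consEquiv fun _ : Fin (ν+1) => ℤ) q)) := by
      intro q
      rw [← Real.exp_add]
      congr 1
      have hl : l1 ((Fin.consEquiv fun _ : Fin (ν+1) => ℤ) q) = |(q.1 : ℝ)| + l1 q.2 := by
        simp [l1, Fin.consEquiv, Fin.sum_univ_succ]
      rw [hl]
      ring
    exact (Fin.consEquiv fun _ : Fin (ν+1) => ℤ).summable_iff.mp (hmul.congr heq)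

lemma summable_exp_zlat {ν1 ν2 : ℕ} {β1 β2 : ℝ} (h1 : 0 < β1) (h2 : 0 < β2) :
    Summable fun p : ZLat ν1 ν2 => Real.exp (-β1 * l1 p.1 - β2 * l1 p.2) := by
  have h := (summable_exp_pi h1 ν1).mul_of_nonneg (summable_exp_pi h2 ν2)
    (fun _ => (Real.exp_pos _).le) fun _ => (Real.exp_pos _).le
  refine h.congr fun p => ?_
  rw [← Real.exp_add]
  congr 1
  ring

lemma ofReal_norm_tsum_le {ι : Type*} (f : ι → ℂ) :
    ENNReal.ofReal ‖∑' i, f i‖ ≤ ∑' i, ENNReal.ofReal ‖f i‖ := by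
  by_cases h : Summable fun i => ‖f i‖
  · calc ENNReal.ofReal ‖∑' i, f i‖
        ≤ ENNReal.ofReal (∑' i, ‖f i‖) :=
          ENNReal.ofReal_le_ofReal (norm_tsum_le_tsum_norm h)
      _ = ∑' i, ENNReal.ofReal ‖f i‖ :=
          ENNReal.ofReal_tsum_of_nonneg (fun _ => norm_nonneg _) h
  · have h2 : ¬ Summable f := fun hs => h (summable_norm_iff.mpr hs)
    rw [tsum_eq_zero_of_not_summable h2]
    simp

lemma triple_tsum_le {ν1 ν2 : ℕ} (W F : ZLat ν1 ν2 → ℝ≥0∞)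
    (hW : ∀ a b c : ZLat ν1 ν2, W (a - b + c) ≤ W a * W b * W c) :
    ∑' p : ZLat ν1 ν2, W p * ∑' v : TripleFiber ν1 ν2 p,
        F v.val.1 * F v.val.2.1 * F v.val.2.2
      ≤ (∑' q, W q * F q) * (∑' q, W q * F q) * (∑' q, W q * F q) := by
  set G : ZLat ν1 ν2 → ℝ≥0∞ := fun q => W q * F q with hG
  have step1 : ∀ p : ZLat ν1 ν2,
      W p * ∑' v : TripleFiber ν1 ν2 p, F v.val.1 * F v.val.2.1 * F v.val.2.2
        ≤ ∑' v : TripleFiber ν1 ν2 p, G v.val.1 * G v.val.2.1 * G v.val.2.2 := by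
    intro p
    rw [← ENNReal.tsum_mul_left]
    refine ENNReal.tsum_le_tsum fun v => ?_
    have hp : W p ≤ W v.val.1 * W v.val.2.1 * W v.val.2.2 := by
      have h := hW v.val.1 v.val.2.1 v.val.2.2
      rwa [v.prop] at h
    calc W p * (F v.val.1 * F v.val.2.1 * F v.val.2.2)
        ≤ (W v.val.1 * W v.val.2.1 * W v.val.2.2) *
            (F v.val.1 * F v.val.2.1 * F v.val.2.2) := mul_le_mul_left hp _
      _ = G v.val.1 * G v.val.2.1 * G v.val.2.2 := by rw [hG]; ring
  have step2 : ∑' p : ZLat ν1 ν2, ∑' v : TripleFiber ν1 ν2 p,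
      G v.val.1 * G v.val.2.1 * G v.val.2.2
        ≤ ∑' w : ZLat ν1 ν2 × ZLat ν1 ν2 × ZLat ν1 ν2, G w.1 * G w.2.1 * G w.2.2 := by
    rw [← ENNReal.tsum_sigma' (fun x : Σ p : ZLat ν1 ν2, TripleFiber ν1 ν2 p =>
      G x.2.val.1 * G x.2.val.2.1 * G x.2.val.2.2)]
    have hinj : Function.Injective
        (fun x : Σ p : ZLat ν1 ν2, TripleFiber ν1 ν2 p => x.2.val) := by
      rintro ⟨p, v⟩ ⟨q, w⟩ h
      simp only at h
      have hpq : p = q := by rw [← v.prop, ← w.prop, h]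
      subst hpq
      exact congrArg (Sigma.mk p) (Subtype.ext h)
    exact ENNReal.tsum_comp_le_tsum_of_injective hinj
      fun w => G w.1 * G w.2.1 * G w.2.2
  have step3 : ∑' w : ZLat ν1 ν2 × ZLat ν1 ν2 × ZLat ν1 ν2, G w.1 * G w.2.1 * G w.2.2
      = (∑' q, G q) * (∑' q, G q) * (∑' q, G q) := by
    rw [ENNReal.tsum_prod']
    have hinner : ∀ a : ZLat ν1 ν2,
        (∑' y : ZLat ν1 ν2 × ZLat ν1 ν2, G a * G y.1 * G y.2)
          = G a * ((∑' q, G q) * (∑' q, G q)) := by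
      intro a
      rw [ENNReal.tsum_prod']
      have h1 : ∀ b : ZLat ν1 ν2, (∑' c' : ZLat ν1 ν2, G a * G b * G c')
          = (G a * G b) * ∑' q, G q := fun b => ENNReal.tsum_mul_left.symm ▸ rfl
      calc (∑' (b : ZLat ν1 ν2) (c' : ZLat ν1 ν2), G a * G b * G c')
          = ∑' b : ZLat ν1 ν2, (G a * G b) * ∑' q, G q := by
            exact tsum_congr fun b => ENNReal.tsum_mul_left
        _ = (∑' b : ZLat ν1 ν2, G a * G b) * ∑' q, G q := ENNReal.tsum_mul_right
        _ = (G a * ∑' q, G q) * ∑' q, G q := by rw [ENNReal.tsum_mul_left]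
        _ = G a * ((∑' q, G q) * (∑' q, G q)) := by rw [mul_assoc]
    calc (∑' (a : ZLat ν1 ν2) (y : ZLat ν1 ν2 × ZLat ν1 ν2), G a * G y.1 * G y.2)
        = ∑' a : ZLat ν1 ν2, G a * ((∑' q, G q) * (∑' q, G q)) :=
          tsum_congr hinner
      _ = (∑' q, G q) * ((∑' q, G q) * (∑' q, G q)) := ENNReal.tsum_mul_right
      _ = (∑' q, G q) * (∑' q, G q) * (∑' q, G q) := by rw [mul_assoc]
  calc ∑' p : ZLat ν1 ν2, W p * ∑' v : TripleFiber ν1 ν2 p,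
        F v.val.1 * F v.val.2.1 * F v.val.2.2
      ≤ ∑' p : ZLat ν1 ν2, ∑' v : TripleFiber ν1 ν2 p,
          G v.val.1 * G v.val.2.1 * G v.val.2.2 := ENNReal.tsum_le_tsum step1
    _ ≤ ∑' w : ZLat ν1 ν2 × ZLat ν1 ν2 × ZLat ν1 ν2, G w.1 * G w.2.1 * G w.2.2 := step2
    _ = (∑' q, G q) * (∑' q, G q) * (∑' q, G q) := step3

end AsymAux

end AsymAux

noncomputable section AsymKey

open scoped ENNReal

namespace AsymAux

lemma key_estimate {ν1 ν2 : ℕ} {κ1 κ2 : ℝ} (hκ1 : 0 < κ1) (hκ2 : 0 < κ2)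
    (ω : Fin ν1 → ℝ) (ω' : Fin ν2 → ℝ) (c : ZLat ν1 ν2 → ℂ)
    (hc : ∀ p : ZLat ν1 ν2, ‖c p‖ ≤ Real.exp (-κ1 * l1 p.1 - κ2 * l1 p.2))
    (ε t : ℝ) (ht : 0 ≤ t)
    (hsm : |ε| * t *
      (8 * (∑' p : ZLat ν1 ν2, Real.exp (-(κ1/2) * l1 p.1 - (κ2/2) * l1 p.2)) ^ 2) ≤ 1) :
    ∀ k (p : ZLat ν1 ν2), ‖picard ω ω' c ε (k+1) t p - Phi ω ω' t p * c p‖ ≤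
      |ε| * t * (8 * (∑' p : ZLat ν1 ν2, Real.exp (-(κ1/2) * l1 p.1 - (κ2/2) * l1 p.2)) ^ 3) *
        Real.exp (-(κ1/2) * l1 p.1 - (κ2/2) * l1 p.2) := by
  have hκ12 : 0 < κ1 / 2 := by linarith
  have hκ22 : 0 < κ2 / 2 := by linarith
  have hsum : Summable fun p : ZLat ν1 ν2 =>
      Real.exp (-(κ1/2) * l1 p.1 - (κ2/2) * l1 p.2) := summable_exp_zlat hκ12 hκ22
  set Zr : ℝ := ∑' p : ZLat ν1 ν2, Real.exp (-(κ1/2) * l1 p.1 - (κ2/2) * l1 p.2) with hZrdef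
  have hZr1 : 1 ≤ Zr := by
    have h0 := Summable.le_tsum hsum (0 : ZLat ν1 ν2) fun _ _ => (Real.exp_pos _).le
    rw [hZrdef]
    refine le_trans (le_of_eq ?_) h0
    simp [l1_zero]
  have hZrpos : 0 < Zr := lt_of_lt_of_le one_pos hZr1
  set W : ZLat ν1 ν2 → ℝ≥0∞ := fun p =>
    ENNReal.ofReal (Real.exp ((κ1/2) * l1 p.1 + (κ2/2) * l1 p.2)) with hWdef
  set Z : ℝ≥0∞ := ENNReal.ofReal Zr with hZdef
  set D : ℕ → ZLat ν1 ν2 → ℝ≥0∞ := fun k p =>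
    ⨆ s ∈ Set.Icc (0:ℝ) t, ENNReal.ofReal ‖picard ω ω' c ε k s p‖ with hDdef
  set B : ℕ → ZLat ν1 ν2 → ℝ≥0∞ := fun k p =>
    ∑' v : TripleFiber ν1 ν2 p, D k v.val.1 * D k v.val.2.1 * D k v.val.2.2 with hBdef
  set Q : ℕ → ℝ≥0∞ := fun k => ∑' p, W p * D k p with hQdef
  have hZtop : Z ≠ ∞ := ENNReal.ofReal_ne_top
  have hZ1 : (1:ℝ≥0∞) ≤ Z := by
    rw [hZdef, ← ENNReal.ofReal_one]
    exact ENNReal.ofReal_le_ofReal hZr1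
  have hW1 : ∀ p, (1:ℝ≥0∞) ≤ W p := by
    intro p
    rw [hWdef, ← ENNReal.ofReal_one]
    refine ENNReal.ofReal_le_ofReal ?_
    rw [← Real.exp_zero]
    refine Real.exp_le_exp.mpr ?_
    have := l1_nonneg p.1
    have := l1_nonneg p.2
    positivity
  have hWtop : ∀ p, W p ≠ ∞ := fun p => ENNReal.ofReal_ne_top
  have hW0 : ∀ p, W p ≠ 0 := fun p => (lt_of_lt_of_le zero_lt_one (hW1 p)).ne'
  have hWexp : ∀ p : ZLat ν1 ν2,
      W p * ENNReal.ofReal (Real.exp (-κ1 * l1 p.1 - κ2 * l1 p.2))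
        = ENNReal.ofReal (Real.exp (-(κ1/2) * l1 p.1 - (κ2/2) * l1 p.2)) := by
    intro p
    rw [hWdef]
    simp only
    rw [← ENNReal.ofReal_mul (Real.exp_pos _).le, ← Real.exp_add]
    congr 1
    congr 1
    ring
  have hZsum : ∑' p : ZLat ν1 ν2,
      ENNReal.ofReal (Real.exp (-(κ1/2) * l1 p.1 - (κ2/2) * l1 p.2)) = Z := by
    rw [hZdef, hZrdef]
    exact (ENNReal.ofReal_tsum_of_nonneg (fun _ => (Real.exp_pos _).le) hsum).symm
  have hWmul : ∀ a b c' : ZLat ν1 ν2, W (a - b + c') ≤ W a * W b * W c' := by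
    intro a b c'
    rw [hWdef]
    simp only
    rw [← ENNReal.ofReal_mul (Real.exp_pos _).le, ← ENNReal.ofReal_mul
      (mul_nonneg (Real.exp_pos _).le (Real.exp_pos _).le), ← Real.exp_add, ← Real.exp_add]
    refine ENNReal.ofReal_le_ofReal (Real.exp_le_exp.mpr ?_)
    have h1 : l1 ((a - b + c').1) ≤ l1 a.1 + l1 b.1 + l1 c'.1 := by
      have := l1_sub_add a.1 b.1 c'.1
      simpa using this
    have h2 : l1 ((a - b + c').2) ≤ l1 a.2 + l1 b.2 + l1 c'.2 := by
      have := l1_sub_add a.2 b.2 c'.2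
      simpa using this
    nlinarith [mul_le_mul_of_nonneg_left h1 hκ12.le, mul_le_mul_of_nonneg_left h2 hκ22.le]
  have hfiber : ∀ (k : ℕ) (p : ZLat ν1 ν2) (s : ℝ), s ∈ Set.Icc (0:ℝ) t →
      ENNReal.ofReal ‖∑' v : TripleFiber ν1 ν2 p,
          picard ω ω' c ε k s v.val.1 * (starRingEnd ℂ) (picard ω ω' c ε k s v.val.2.1) *
            picard ω ω' c ε k s v.val.2.2‖ ≤ B k p := by
    intro k p s hs
    refine (ofReal_norm_tsum_le _).trans ?_
    rw [hBdef]
    refine ENNReal.tsum_le_tsum fun v => ?_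
    have hD : ∀ q, ENNReal.ofReal ‖picard ω ω' c ε k s q‖ ≤ D k q := by
      intro q
      exact le_biSup (fun s' => ENNReal.ofReal ‖picard ω ω' c ε k s' q‖) hs
    rw [norm_mul, norm_mul, RCLike.norm_conj,
      ENNReal.ofReal_mul (mul_nonneg (norm_nonneg _) (norm_nonneg _)),
      ENNReal.ofReal_mul (norm_nonneg _)]
    exact mul_le_mul' (mul_le_mul' (hD _) (hD _)) (hD _)
  have hQB : ∀ k, ∑' p, W p * B k p ≤ Q k * Q k * Q k := by
    intro k
    rw [hQdef, hBdef]
    exact triple_tsum_le W (D k) hWmul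
  have h2Ztop : (2 * Z * (2 * Z) * (2 * Z)) ≠ ∞ := by
    refine ENNReal.mul_ne_top (ENNReal.mul_ne_top ?_ ?_) ?_ <;>
      exact ENNReal.mul_ne_top (by simp) hZtop
  have hint : ∀ k, Q k ≤ 2 * Z → ∀ (p : ZLat ν1 ν2) (s : ℝ), s ∈ Set.Icc (0:ℝ) t →
      ENNReal.ofReal ‖picard ω ω' c ε (k+1) s p - Phi ω ω' s p * c p‖
        ≤ ENNReal.ofReal (|ε| * t) * B k p := by
    intro k hQk p s hs
    have hWB : W p * B k p ≤ 2 * Z * (2 * Z) * (2 * Z) := by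
      refine (ENNReal.le_tsum p).trans ((hQB k).trans ?_)
      exact mul_le_mul' (mul_le_mul' hQk hQk) hQk
    have hBfin : B k p ≠ ∞ := by
      refine ne_top_of_le_ne_top h2Ztop (le_trans ?_ hWB)
      exact le_mul_of_one_le_left' (hW1 p)
    have hpic : picard ω ω' c ε (k+1) s p - Phi ω ω' s p * c p
        = Complex.I * (ε : ℂ) * ∫ σ in (0:ℝ)..s, Phi ω ω' (s - σ) p *
            ∑' v : TripleFiber ν1 ν2 p, picard ω ω' c ε k σ v.val.1 *
              (starRingEnd ℂ) (picard ω ω' c ε k σ v.val.2.1) *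
                picard ω ω' c ε k σ v.val.2.2 := by
      simp only [picard]
      ring
    rw [hpic]
    have hCb : ∀ σ ∈ Set.uIoc (0:ℝ) s, ‖Phi ω ω' (s - σ) p *
        ∑' v : TripleFiber ν1 ν2 p, picard ω ω' c ε k σ v.val.1 *
          (starRingEnd ℂ) (picard ω ω' c ε k σ v.val.2.1) *
            picard ω ω' c ε k σ v.val.2.2‖ ≤ (B k p).toReal := by
      intro σ hσ
      have hσ' : σ ∈ Set.Icc (0:ℝ) t := by
        rw [Set.uIoc_of_le hs.1] at hσ
        exact ⟨hσ.1.le, hσ.2.trans hs.2⟩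
      rw [norm_mul, norm_Phi, one_mul]
      exact (ENNReal.ofReal_le_iff_le_toReal hBfin).mp (hfiber k p σ hσ')
    have hI := intervalIntegral.norm_integral_le_of_norm_le_const hCb
    rw [sub_zero, abs_of_nonneg hs.1] at hI
    have hnorm : ‖Complex.I * (ε : ℂ) * ∫ σ in (0:ℝ)..s, Phi ω ω' (s - σ) p *
        ∑' v : TripleFiber ν1 ν2 p, picard ω ω' c ε k σ v.val.1 *
          (starRingEnd ℂ) (picard ω ω' c ε k σ v.val.2.1) *
            picard ω ω' c ε k σ v.val.2.2‖
        ≤ |ε| * ((B k p).toReal * s) := by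
      rw [norm_mul, norm_mul, Complex.norm_I, one_mul, Complex.norm_real, Real.norm_eq_abs]
      exact mul_le_mul_of_nonneg_left hI (abs_nonneg ε)
    refine (ENNReal.ofReal_le_ofReal hnorm).trans ?_
    have hstep : |ε| * ((B k p).toReal * s) ≤ (|ε| * t) * (B k p).toReal := by
      have hBtr : 0 ≤ (B k p).toReal := ENNReal.toReal_nonneg
      have hst : s ≤ t := hs.2
      nlinarith [mul_nonneg (mul_nonneg (abs_nonneg ε) hBtr) (sub_nonneg.mpr hst)]
    refine (ENNReal.ofReal_le_ofReal hstep).trans ?_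
    rw [ENNReal.ofReal_mul (mul_nonneg (abs_nonneg ε) ht), ENNReal.ofReal_toReal hBfin]
  have hQ : ∀ k, Q k ≤ 2 * Z := by
    intro k
    induction k with
    | zero =>
      have hD0 : ∀ p, D 0 p ≤ ENNReal.ofReal (Real.exp (-κ1 * l1 p.1 - κ2 * l1 p.2)) := by
        intro p
        rw [hDdef]
        refine iSup₂_le fun s hs => ?_
        simp only [picard]
        refine ENNReal.ofReal_le_ofReal ?_
        rw [norm_mul, norm_Phi, one_mul]
        exact hc p
      have : Q 0 ≤ Z := by
        rw [hQdef]
        calc ∑' p, W p * D 0 p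
            ≤ ∑' p : ZLat ν1 ν2,
                ENNReal.ofReal (Real.exp (-(κ1/2) * l1 p.1 - (κ2/2) * l1 p.2)) := by
              refine ENNReal.tsum_le_tsum fun p => ?_
              exact le_trans (mul_le_mul_right (hD0 p) _) (le_of_eq (hWexp p))
          _ = Z := hZsum
      exact this.trans (le_mul_of_one_le_left' one_le_two)
    | succ k ih =>
      have h8 : 2 * Z * (2 * Z) * (2 * Z) = ENNReal.ofReal (8 * Zr ^ 3) := by
        rw [hZdef]
        rw [show (2:ℝ≥0∞) = ENNReal.ofReal 2 by simp]
        rw [← ENNReal.ofReal_mul (by norm_num), ← ENNReal.ofReal_mul (by positivity),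
          ← ENNReal.ofReal_mul (by positivity)]
        congr 1
        ring
      have hsmE : ENNReal.ofReal (|ε| * t) * (2 * Z * (2 * Z) * (2 * Z)) ≤ Z := by
        rw [h8, hZdef, ← ENNReal.ofReal_mul (mul_nonneg (abs_nonneg ε) ht)]
        refine ENNReal.ofReal_le_ofReal ?_
        have : |ε| * t * (8 * Zr ^ 3) = (|ε| * t * (8 * Zr ^ 2)) * Zr := by ring
        rw [this]
        nlinarith [mul_nonneg (abs_nonneg ε) ht]
      have hD1 : ∀ p, D (k+1) p ≤ ENNReal.ofReal (Real.exp (-κ1 * l1 p.1 - κ2 * l1 p.2))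
          + ENNReal.ofReal (|ε| * t) * B k p := by
        intro p
        conv_lhs => rw [hDdef]
        refine iSup₂_le fun s hs => ?_
        have hsplit : ENNReal.ofReal ‖picard ω ω' c ε (k+1) s p‖
            ≤ ENNReal.ofReal ‖Phi ω ω' s p * c p‖ +
              ENNReal.ofReal ‖picard ω ω' c ε (k+1) s p - Phi ω ω' s p * c p‖ := by
          refine le_trans (ENNReal.ofReal_le_ofReal ?_) ENNReal.ofReal_add_le
          calc ‖picard ω ω' c ε (k+1) s p‖
              = ‖Phi ω ω' s p * c p + (picard ω ω' c ε (k+1) s p - Phi ω ω' s p * c p)‖ := by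
                congr 1
                ring
            _ ≤ _ := norm_add_le _ _
        refine hsplit.trans (add_le_add ?_ (hint k ih p s hs))
        refine ENNReal.ofReal_le_ofReal ?_
        rw [norm_mul, norm_Phi, one_mul]
        exact hc p
      calc Q (k+1)
          ≤ ∑' p, (W p * (ENNReal.ofReal (Real.exp (-κ1 * l1 p.1 - κ2 * l1 p.2))
              + ENNReal.ofReal (|ε| * t) * B k p)) := by
            rw [hQdef]
            exact ENNReal.tsum_le_tsum fun p => mul_le_mul_right (hD1 p) _
        _ = ∑' p, (W p * ENNReal.ofReal (Real.exp (-κ1 * l1 p.1 - κ2 * l1 p.2))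
              + ENNReal.ofReal (|ε| * t) * (W p * B k p)) := by
            refine tsum_congr fun p => ?_
            ring
        _ = Z + ENNReal.ofReal (|ε| * t) * ∑' p, W p * B k p := by
            rw [ENNReal.tsum_add, ENNReal.tsum_mul_left]
            congr 1
            rw [← hZsum]
            exact tsum_congr fun p => hWexp p
        _ ≤ Z + ENNReal.ofReal (|ε| * t) * (2 * Z * (2 * Z) * (2 * Z)) := by
            refine add_le_add_right (mul_le_mul_right ?_ _) _
            exact (hQB k).trans (mul_le_mul' (mul_le_mul' ih ih) ih)
        _ ≤ Z + Z := add_le_add_right hsmE _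
        _ = 2 * Z := (two_mul Z).symm
  -- final
  intro k p
  have h8 : 2 * Z * (2 * Z) * (2 * Z) = ENNReal.ofReal (8 * Zr ^ 3) := by
    rw [hZdef]
    rw [show (2:ℝ≥0∞) = ENNReal.ofReal 2 by simp]
    rw [← ENNReal.ofReal_mul (by norm_num), ← ENNReal.ofReal_mul (by positivity),
      ← ENNReal.ofReal_mul (by positivity)]
    congr 1
    ring
  have hWB : W p * B k p ≤ 2 * Z * (2 * Z) * (2 * Z) := by
    refine (ENNReal.le_tsum p).trans ((hQB k).trans ?_)
    exact mul_le_mul' (mul_le_mul' (hQ k) (hQ k)) (hQ k)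
  have hBle : B k p ≤ (W p)⁻¹ * (2 * Z * (2 * Z) * (2 * Z)) := by
    have hb : B k p = (W p)⁻¹ * (W p * B k p) := by
      rw [← mul_assoc, ENNReal.inv_mul_cancel (hW0 p) (hWtop p), one_mul]
    rw [hb]
    exact mul_le_mul_right hWB _
  have hfin : (W p)⁻¹ * (2 * Z * (2 * Z) * (2 * Z))
      = ENNReal.ofReal (Real.exp (-(κ1/2) * l1 p.1 - (κ2/2) * l1 p.2) * (8 * Zr ^ 3)) := by
    rw [hWdef]
    simp only
    rw [h8, ← ENNReal.ofReal_inv_of_pos (Real.exp_pos _), ← Real.exp_neg,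
      ← ENNReal.ofReal_mul (Real.exp_pos _).le]
    congr 2
    ring
  have hDT := hint k (hQ k) p t ⟨ht, le_refl t⟩
  have hEbound : ENNReal.ofReal ‖picard ω ω' c ε (k+1) t p - Phi ω ω' t p * c p‖
      ≤ ENNReal.ofReal (|ε| * t * (8 * Zr ^ 3) *
          Real.exp (-(κ1/2) * l1 p.1 - (κ2/2) * l1 p.2)) := by
    refine hDT.trans ?_
    calc ENNReal.ofReal (|ε| * t) * B k p
        ≤ ENNReal.ofReal (|ε| * t) * ((W p)⁻¹ * (2 * Z * (2 * Z) * (2 * Z))) :=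
          mul_le_mul_right hBle _
      _ = ENNReal.ofReal (|ε| * t * (8 * Zr ^ 3) *
            Real.exp (-(κ1/2) * l1 p.1 - (κ2/2) * l1 p.2)) := by
          rw [hfin, ← ENNReal.ofReal_mul (mul_nonneg (abs_nonneg ε) ht)]
          congr 1
          ring
  have hrhs : 0 ≤ |ε| * t * (8 * Zr ^ 3) *
      Real.exp (-(κ1/2) * l1 p.1 - (κ2/2) * l1 p.2) := by
    have h8' : (0:ℝ) ≤ 8 * Zr ^ 3 := by positivity
    have := mul_nonneg (mul_nonneg (mul_nonneg (abs_nonneg ε) ht) h8') (Real.exp_pos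
      (-(κ1/2) * l1 p.1 - (κ2/2) * l1 p.2)).le
    exact this
  exact (ENNReal.ofReal_le_ofReal_iff hrhs).mp hEbound

end AsymAux

end AsymKey

noncomputable section

/-- On the time scale `t_ε = |ε|^{−1+η}` the nonlinear solution asymptotically
approaches the linear solution in the `𝓗^{(ρ1,ρ2)}`-norm. -/
theorem asymptotic_approach_to_linear_solution
    (ν1 ν2 : ℕ) (hν1 : 1 ≤ ν1) (hν2 : 1 ≤ ν2)
    (κ1 κ2 : ℝ) (hκ1 : 0 < κ1) (hκ1' : κ1 ≤ 1) (hκ2 : 0 < κ2) (hκ2' : κ2 ≤ 1)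
    (ρ1 ρ2 : ℝ) (hρ1 : 0 ≤ ρ1) (hρ2 : 0 ≤ ρ2)
    (h1 : 0 < κ1 / 2 - 2 * ρ1) (h1' : κ1 / 2 - 2 * ρ1 ≤ 1)
    (h2 : 0 < κ2 / 2 - 2 * ρ2) (h2' : κ2 / 2 - 2 * ρ2 ≤ 1)
    (η : ℝ) (hη0 : 0 < η) (hη1 : η < 1) :
    ∃ C : ℝ, 0 < C ∧ ∃ ε₀ : ℝ, 0 < ε₀ ∧
      ∀ (ω : Fin ν1 → ℝ) (ω' : Fin ν2 → ℝ) (c : ZLat ν1 ν2 → ℂ),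
        (∀ p : ZLat ν1 ν2, ‖c p‖ ≤ Real.exp (-κ1 * l1 p.1 - κ2 * l1 p.2)) →
        ∀ ε : ℝ, ε ≠ 0 → |ε| ≤ ε₀ →
        ∀ 𝔠 : ℝ → ZLat ν1 ν2 → ℂ,
          (∀ t ∈ Set.Icc (0 : ℝ) (Teps ν1 ν2 κ1 κ2 ε), ∀ p : ZLat ν1 ν2,
            Filter.Tendsto (fun k => picard ω ω' c ε k t p) Filter.atTop (𝓝 (𝔠 t p))) →
          |ε| ^ (-1 + η) ≤ Teps ν1 ν2 κ1 κ2 ε ∧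
          Real.sqrt (∑' p : ZLat ν1 ν2,
              Real.exp (2 * ρ1 * l1 p.1 + 2 * ρ2 * l1 p.2) *
                ‖𝔠 (|ε| ^ (-1 + η)) p - Phi ω ω' (|ε| ^ (-1 + η)) p * c p‖ ^ 2)
            ≤ C * |ε| ^ η := by
  have hκ12 : 0 < κ1 / 2 := by linarith
  have hκ22 : 0 < κ2 / 2 := by linarith
  have hsum : Summable fun p : ZLat ν1 ν2 =>
      Real.exp (-(κ1/2) * l1 p.1 - (κ2/2) * l1 p.2) :=
    AsymAux.summable_exp_zlat hκ12 hκ22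
  set Zr : ℝ := ∑' p : ZLat ν1 ν2, Real.exp (-(κ1/2) * l1 p.1 - (κ2/2) * l1 p.2) with hZrdef
  have hZr1 : 1 ≤ Zr := by
    have h0 := Summable.le_tsum hsum (0 : ZLat ν1 ν2) fun _ _ => (Real.exp_pos _).le
    rw [hZrdef]
    refine le_trans (le_of_eq ?_) h0
    simp [AsymAux.l1_zero]
  have hZrpos : 0 < Zr := lt_of_lt_of_le one_pos hZr1
  set KT : ℝ := 4 / 27 * (κ1 / 6) ^ ν1 * (κ2 / 6) ^ ν2 with hKTdef
  have hKTpos : 0 < KT := by positivity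
  have hCpos : 0 < 8 * Zr ^ 3 * Real.sqrt Zr := by
    have := Real.sqrt_pos.mpr hZrpos
    positivity
  have h8Zr2 : (0:ℝ) < 8 * Zr ^ 2 := by positivity
  refine ⟨8 * Zr ^ 3 * Real.sqrt Zr, hCpos,
    min (KT ^ (1/η)) ((8 * Zr ^ 2)⁻¹ ^ (1/η)),
    lt_min (Real.rpow_pos_of_pos hKTpos _) (Real.rpow_pos_of_pos (by positivity) _), ?_⟩
  intro ω ω' c hc ε hε hεle 𝔠 hconv
  have hεpos : 0 < |ε| := abs_pos.mpr hε
  set tε : ℝ := |ε| ^ (-1 + η : ℝ) with htdef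
  have ht0 : 0 ≤ tε := (Real.rpow_pos_of_pos hεpos _).le
  have hmulε : |ε| * tε = |ε| ^ η := by
    have h := (Real.rpow_add hεpos 1 (-1 + η)).symm
    rw [Real.rpow_one] at h
    rw [htdef, h]
    norm_num
  have hrpow : ∀ a : ℝ, 0 < a → |ε| ≤ a ^ (1/η) → |ε| ^ η ≤ a := by
    intro a ha hle
    have h1 : |ε| ^ η ≤ (a ^ (1/η)) ^ η :=
      Real.rpow_le_rpow (abs_nonneg ε) hle hη0.le
    rwa [← Real.rpow_mul ha.le, one_div_mul_cancel hη0.ne',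
      Real.rpow_one] at h1
  have hKT' : |ε| ^ η ≤ KT := hrpow KT hKTpos ((le_min_iff.mp hεle).1)
  have hsm' : |ε| ^ η ≤ (8 * Zr ^ 2)⁻¹ :=
    hrpow _ (by positivity) ((le_min_iff.mp hεle).2)
  have hTeps : Teps ν1 ν2 κ1 κ2 ε = KT * |ε|⁻¹ := by
    rw [Teps, hKTdef]
  have hpart1 : tε ≤ Teps ν1 ν2 κ1 κ2 ε := by
    rw [hTeps, htdef]
    have hsplit : |ε| ^ (-1 + η : ℝ) = |ε|⁻¹ * |ε| ^ η := by
      rw [Real.rpow_add hεpos, Real.rpow_neg_one]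
    rw [hsplit, mul_comm KT _]
    exact mul_le_mul_of_nonneg_left hKT' (inv_nonneg.mpr (abs_nonneg ε))
  refine ⟨hpart1, ?_⟩
  have hsmall : |ε| * tε * (8 * Zr ^ 2) ≤ 1 := by
    rw [hmulε]
    calc |ε| ^ η * (8 * Zr ^ 2) ≤ (8 * Zr ^ 2)⁻¹ * (8 * Zr ^ 2) :=
          mul_le_mul_of_nonneg_right hsm' h8Zr2.le
      _ = 1 := inv_mul_cancel₀ h8Zr2.ne'
  have hkey := AsymAux.key_estimate hκ1 hκ2 ω ω' c hc ε tε ht0 hsmall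
  have hdiff : ∀ p : ZLat ν1 ν2, ‖𝔠 tε p - Phi ω ω' tε p * c p‖ ≤
      |ε| * tε * (8 * Zr ^ 3) * Real.exp (-(κ1/2) * l1 p.1 - (κ2/2) * l1 p.2) := by
    intro p
    have hmem : tε ∈ Set.Icc (0:ℝ) (Teps ν1 ν2 κ1 κ2 ε) := ⟨ht0, hpart1⟩
    have hlim := (hconv tε hmem p).comp (tendsto_add_atTop_nat 1)
    have hlim2 : Filter.Tendsto
        (fun k => ‖picard ω ω' c ε (k+1) tε p - Phi ω ω' tε p * c p‖)
        Filter.atTop (𝓝 ‖𝔠 tε p - Phi ω ω' tε p * c p‖) := (hlim.sub_const _).norm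
    exact le_of_tendsto hlim2 (Filter.Eventually.of_forall fun k => hkey k p)
  set K : ℝ := |ε| * tε * (8 * Zr ^ 3) with hKdef
  have hK0 : 0 ≤ K := by
    rw [hKdef]
    have : (0:ℝ) ≤ 8 * Zr ^ 3 := by positivity
    exact mul_nonneg (mul_nonneg (abs_nonneg ε) ht0) this
  have hterm : ∀ p : ZLat ν1 ν2,
      Real.exp (2 * ρ1 * l1 p.1 + 2 * ρ2 * l1 p.2) * ‖𝔠 tε p - Phi ω ω' tε p * c p‖ ^ 2
        ≤ K ^ 2 * Real.exp (-(κ1/2) * l1 p.1 - (κ2/2) * l1 p.2) := by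
    intro p
    have hb1 : ‖𝔠 tε p - Phi ω ω' tε p * c p‖ ^ 2
        ≤ (K * Real.exp (-(κ1/2) * l1 p.1 - (κ2/2) * l1 p.2)) ^ 2 :=
      pow_le_pow_left₀ (norm_nonneg _) (hdiff p) 2
    calc Real.exp (2 * ρ1 * l1 p.1 + 2 * ρ2 * l1 p.2) * ‖𝔠 tε p - Phi ω ω' tε p * c p‖ ^ 2
        ≤ Real.exp (2 * ρ1 * l1 p.1 + 2 * ρ2 * l1 p.2) *
            (K * Real.exp (-(κ1/2) * l1 p.1 - (κ2/2) * l1 p.2)) ^ 2 :=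
          mul_le_mul_of_nonneg_left hb1 (Real.exp_pos _).le
      _ = K ^ 2 * (Real.exp (2 * ρ1 * l1 p.1 + 2 * ρ2 * l1 p.2) *
            (Real.exp (-(κ1/2) * l1 p.1 - (κ2/2) * l1 p.2) *
              Real.exp (-(κ1/2) * l1 p.1 - (κ2/2) * l1 p.2))) := by ring
      _ = K ^ 2 * Real.exp ((2 * ρ1 * l1 p.1 + 2 * ρ2 * l1 p.2) +
            ((-(κ1/2) * l1 p.1 - (κ2/2) * l1 p.2) +
              (-(κ1/2) * l1 p.1 - (κ2/2) * l1 p.2))) := by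
          rw [← Real.exp_add, ← Real.exp_add]
      _ ≤ K ^ 2 * Real.exp (-(κ1/2) * l1 p.1 - (κ2/2) * l1 p.2) := by
          refine mul_le_mul_of_nonneg_left (Real.exp_le_exp.mpr ?_) (sq_nonneg K)
          nlinarith [AsymAux.l1_nonneg p.1, AsymAux.l1_nonneg p.2]
  have hgsum : Summable fun p : ZLat ν1 ν2 =>
      K ^ 2 * Real.exp (-(κ1/2) * l1 p.1 - (κ2/2) * l1 p.2) := hsum.mul_left _
  have hlsum : Summable fun p : ZLat ν1 ν2 =>
      Real.exp (2 * ρ1 * l1 p.1 + 2 * ρ2 * l1 p.2) *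
        ‖𝔠 tε p - Phi ω ω' tε p * c p‖ ^ 2 :=
    Summable.of_nonneg_of_le (fun p => by positivity) hterm hgsum
  have hts : (∑' p : ZLat ν1 ν2, Real.exp (2 * ρ1 * l1 p.1 + 2 * ρ2 * l1 p.2) *
      ‖𝔠 tε p - Phi ω ω' tε p * c p‖ ^ 2) ≤ K ^ 2 * Zr := by
    refine (Summable.tsum_le_tsum hterm hlsum hgsum).trans (le_of_eq ?_)
    rw [tsum_mul_left, hZrdef]
  refine le_trans (Real.sqrt_le_sqrt hts) ?_
  rw [Real.sqrt_mul (sq_nonneg K), Real.sqrt_sq hK0]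
  have hfin : K * Real.sqrt Zr = 8 * Zr ^ 3 * Real.sqrt Zr * |ε| ^ η := by
    rw [hKdef, ← hmulε]
    ring
  exact le_of_eq hfin

end
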